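/- Under hypotheses H1–H3, let μ be a Φ_A-invariant Borel probability measure with μ(S_0) = 0 (i.e., μ gives full measure to the set of states where every species is present). Then r_i(μ) = 0 for all i = 1,…,m. -/

import Mathlib

open MeasureTheory Filter Topology

noncomputable section

namespace RP

/-- The state space: species `i` has `n i` individual states;
points are tuples of row vectors. -/
abbrev St (m : ℕ) (n : Fin m → ℕ) := ∀ i : Fin m, Fin (n i) → ℝ

/-- A block-diagonal collection of matrices, one block per species. -/
abbrev Blocks (m : ℕ) (n : Fin m → ℕ) := ∀ i : Fin m, Matrix (Fin (n i)) (Fin (n i)) ℝ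

variable {m : ℕ} {n : Fin m → ℕ}

/-- The nonnegative cone `ℝ^n_+`. -/
def cone (m : ℕ) (n : Fin m → ℕ) : Set (St m n) := {x | ∀ i j, 0 ≤ x i j}

/-- The ℓ¹-norm `‖x^i‖` of the subvector of species `i`. -/
def snorm (x : St m n) (i : Fin m) : ℝ := ∑ j, |x i j|

/-- The extinction set `S₀ = {x ∈ ℝ^n_+ : ∏ᵢ ‖x^i‖ = 0}`. -/
def extinct (m : ℕ) (n : Fin m → ℕ) : Set (St m n) :=
  {x ∈ cone m n | ∏ i, snorm x i = 0}

/-- The update map `Φ_A (x) = x A(x)` (blockwise, row vectors on the left). -/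
def Phi (A : St m n → Blocks m n) (x : St m n) : St m n :=
  fun i => Matrix.vecMul (x i) (A x i)

/-- An explicit norm on matrices (sum of absolute values of the entries). -/
def mnorm {a b : Type*} [Fintype a] [Fintype b] (M : Matrix a b ℝ) : ℝ :=
  ∑ j, ∑ k, |M j k|

/-- The matrix cocycle `A_i(X_0) A_i(X_1) ⋯ A_i(X_{t-1})` along the orbit of `x`. -/
def coc (A : St m n → Blocks m n) (i : Fin m) (x : St m n) :
    ℕ → Matrix (Fin (n i)) (Fin (n i)) ℝ
  | 0 => 1
  | t + 1 => coc A i x t * A ((Phi A)^[t] x) i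

/-- The long-term growth rate `r_i(x)` of species `i` starting from `x`. -/
def rate (A : St m n → Blocks m n) (i : Fin m) (x : St m n) : ℝ :=
  Filter.limsup (fun t : ℕ => Real.log (mnorm (coc A i x t)) / t) Filter.atTop

/-- The long-term growth rate `r_i(μ) = ∫ r_i dμ`. -/
def rateMu (A : St m n → Blocks m n) (i : Fin m) (μ : Measure (St m n)) : ℝ :=
  ∫ x, rate A i x ∂μ

/-- A nonnegative primitive matrix. -/
def IsPrimitive {d : ℕ} (P : Matrix (Fin d) (Fin d) ℝ) : Prop :=
  (∀ j k, 0 ≤ P j k) ∧ ∃ t : ℕ, 0 < t ∧ ∀ j k, 0 < (P ^ t) j k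

/-- Hypotheses H1–H3 of the model. -/
structure Hyp (A : St m n → Blocks m n) (SA : Set (St m n)) : Prop where
  H1cont : Continuous A
  H1nonneg : ∀ x i j k, 0 ≤ A x i j k
  H2 : ∀ i, ∃ P : Matrix (Fin (n i)) (Fin (n i)) ℝ, IsPrimitive P ∧
    ∀ x ∈ cone m n, ∀ j k, (A x i j k = 0 ↔ P j k = 0)
  H3compact : IsCompact SA
  H3sub : SA ⊆ cone m n
  H3absorb : ∀ x ∈ cone m n, ∃ T : ℕ, ∀ t ≥ T, (Phi A)^[t] x ∈ SA

/-- The ω-limit set of `x` under iteration of `f`. -/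
def omegaSet {X : Type*} [TopologicalSpace X] (f : X → X) (x : X) : Set X :=
  {y | ∃ tk : ℕ → ℕ, StrictMono tk ∧ Tendsto (fun s => f^[tk s] x) atTop (𝓝 y)}

/-- `M` is an isolated invariant set for `f` restricted to `Y`: it has a compact
neighborhood `N` in `Y` whose largest invariant subset is contained in `M`. -/
def IsolatedIn {X : Type*} [TopologicalSpace X] (f : X → X) (M Y : Set X) : Prop :=
  ∃ N : Set X, IsCompact N ∧ N ⊆ Y ∧ M ⊆ N ∧ (∀ x ∈ M, N ∈ 𝓝[Y] x) ∧
    ∀ K ⊆ N, f '' K = K → K ⊆ M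

/-- `M ⊆ S₀` is unsaturated: isolated in all of `ℝ^n_+` and its stable set
lies in `S₀`. -/
def Unsaturated (A : St m n → Blocks m n) (M : Set (St m n)) : Prop :=
  IsolatedIn (Phi A) M (cone m n) ∧
    ∀ x ∈ cone m n, omegaSet (Phi A) x ⊆ M → x ∈ extinct m n

/-- The δ-neighborhood of a set within the cone. -/
def nbhd (S : Set (St m n)) (δ : ℝ) : Set (St m n) :=
  {x ∈ cone m n | ∃ y ∈ S, dist x y < δ}

/-- A δ-perturbation of the model `(A, S_A)`. -/
structure Pert (A : St m n → Blocks m n) (SA : Set (St m n)) (δ : ℝ)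
    (B : St m n → Blocks m n) (SB : Set (St m n)) : Prop where
  hyp : Hyp B SB
  sub : SB ⊆ nbhd SA δ
  close : ∀ x ∈ nbhd SA 1, ∀ i j k, |A x i j k - B x i j k| ≤ δ

/-- Permanence with repulsion constant `η`. -/
def PermanentWith (f : St m n → St m n) (η : ℝ) : Prop :=
  ∀ x ∈ cone m n, (∀ i, 0 < snorm x i) →
    ∃ T : ℕ, ∀ t ≥ T, ∀ i, η < snorm (f^[t] x) i

/-- Permanence. -/
def Permanent (f : St m n → St m n) : Prop := ∃ η > 0, PermanentWith f η

/-- Robust permanence: all sufficiently small perturbations are permanent with a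
common constant. -/
def RobustlyPermanent (A : St m n → Blocks m n) (SA : Set (St m n)) : Prop :=
  ∃ δ > 0, ∃ η > 0, ∀ B SB, Pert A SA δ B SB → PermanentWith (Phi B) η

/-- The global attractor `G_A`. -/
def GA (A : St m n → Blocks m n) (SA : Set (St m n)) : Set (St m n) :=
  ⋂ s : ℕ, closure (⋃ t ∈ Set.Ici s, (Phi A)^[t] '' SA)

/-- A backward orbit through `x` lying in `M`. -/
def BackOrbit {X : Type*} (f : X → X) (M : Set X) (x : X) (σ : ℕ → X) : Prop :=
  σ 0 = x ∧ (∀ s, f (σ (s + 1)) = σ s) ∧ ∀ s, σ s ∈ M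

/-- The α-limit set of a backward orbit. -/
def alphaSet {X : Type*} [TopologicalSpace X] (σ : ℕ → X) : Set X :=
  {y | ∃ sk : ℕ → ℕ, StrictMono sk ∧ Tendsto (fun s => σ (sk s)) atTop (𝓝 y)}

/-- A Morse decomposition `{M_1, …, M_k}` of a compact invariant set `M` for `f`. -/
def MorseDecomp {X : Type*} [TopologicalSpace X] (f : X → X) (M : Set X)
    {k : ℕ} (Ms : Fin k → Set X) : Prop :=
  (∀ a b, a ≠ b → Disjoint (Ms a) (Ms b)) ∧
  (∀ a, Ms a ⊆ M ∧ IsCompact (Ms a) ∧ f '' Ms a = Ms a ∧ IsolatedIn f (Ms a) M) ∧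
  (∀ x ∈ M \ ⋃ a, Ms a, ∃ a, omegaSet f x ⊆ Ms a ∧
    ∀ σ : ℕ → X, BackOrbit f M x σ → ∃ b, a < b ∧ alphaSet σ ⊆ Ms b)

/-- `μ` is a weak* limit point of the sequence of measures `Lam`. -/
def WeakLimitPt {X : Type*} [TopologicalSpace X] [MeasurableSpace X]
    (Lam : ℕ → Measure X) (μ : Measure X) : Prop :=
  ∃ tk : ℕ → ℕ, StrictMono tk ∧
    ∀ g : BoundedContinuousFunction X ℝ,
      Tendsto (fun s => ∫ y, g y ∂(Lam (tk s))) atTop (𝓝 (∫ y, g y ∂μ))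

/-- The empirical occupation measures `Lam_t(x) = (1/t) ∑_{s<t} δ_{f^s(x)}`. -/
def emp {X : Type*} [MeasurableSpace X] (f : X → X) (x : X) (t : ℕ) : Measure X :=
  (t : ENNReal)⁻¹ • ∑ s ∈ Finset.range t, Measure.dirac (f^[s] x)

/-- An invariant Borel probability measure for `f`. -/
def InvProb {X : Type*} [MeasurableSpace X] (f : X → X) (μ : Measure X) : Prop :=
  IsProbabilityMeasure μ ∧ μ.map f = μ

end RP

/-!
For `μ`-almost every `x` all species are present, and by Poincaré recurrence the orbit returns
infinitely often to a region `{‖y^i‖ > ε}`. Since `‖X_t^i‖ ≤ ‖x^i‖ ‖A_i(X_0)⋯A_i(X_{t-1})‖`, the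
cocycle is bounded below at those times, so `r_i(x) ≥ 0`. Conversely, if `P_i^{t₀}` is positive,
then so is the row vector `x^i A_i(X_0)⋯A_i(X_{t₀-1})`, hence it sees every entry of the remaining
factor of the cocycle: for `t ≥ t₀` the cocycle is at most a constant times `‖X_t^i‖`, which is
bounded by H3, so `r_i(x) ≤ 0`.
-/

namespace RP

open scoped Matrix

lemma mul_apply_pos_iff {ι κ ν : Type*} [Fintype κ] {M : Matrix ι κ ℝ} {N : Matrix κ ν ℝ}
    (hM : ∀ j l, 0 ≤ M j l) (hN : ∀ l k, 0 ≤ N l k) (j : ι) (k : ν) :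
    0 < (M * N) j k ↔ ∃ l, 0 < M j l ∧ 0 < N l k := by
  rw [Matrix.mul_apply, Finset.sum_pos_iff_of_nonneg fun l _ => mul_nonneg (hM j l) (hN l k)]
  simp only [Finset.mem_univ, true_and]
  exact exists_congr fun l =>
    ⟨fun h => ⟨pos_of_mul_pos_left h (hN l k), pos_of_mul_pos_right h (hM j l)⟩,
      fun h => mul_pos h.1 h.2⟩

section Matrix

variable {ι κ ν : Type*} [Fintype ι] [Fintype κ] [Fintype ν]

lemma mnorm_nonneg (M : Matrix ι κ ℝ) : 0 ≤ mnorm M := by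
  unfold mnorm; positivity

lemma mnorm_mul_le (M : Matrix ι κ ℝ) (N : Matrix κ ν ℝ) :
    mnorm (M * N) ≤ mnorm M * mnorm N := by
  have hrow : ∀ l, ∑ k, |N l k| ≤ mnorm N := fun l =>
    Finset.single_le_sum (f := fun l => ∑ k, |N l k|) (fun _ _ => by positivity)
      (Finset.mem_univ l)
  calc mnorm (M * N) ≤ ∑ j, ∑ k, ∑ l, |M j l| * |N l k| := by
        unfold mnorm
        gcongr with j _ k _
        rw [Matrix.mul_apply]
        exact (Finset.abs_sum_le_sum_abs _ _).trans_eq (by simp only [abs_mul])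
    _ = ∑ j, ∑ l, |M j l| * ∑ k, |N l k| := by
        simp only [Finset.mul_sum]
        exact Finset.sum_congr rfl fun j _ => Finset.sum_comm
    _ ≤ ∑ j, ∑ l, |M j l| * mnorm N := by gcongr with j _ l _; exact hrow l
    _ = mnorm M * mnorm N := by simp only [mnorm, Finset.sum_mul]

lemma sum_abs_vecMul_le (v : ι → ℝ) (M : Matrix ι κ ℝ) :
    ∑ k, |(v ᵥ* M) k| ≤ (∑ j, |v j|) * mnorm M := by
  have hv : ∀ j, |v j| ≤ ∑ j, |v j| := fun j =>
    Finset.single_le_sum (f := fun j => |v j|) (fun _ _ => abs_nonneg _) (Finset.mem_univ j)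
  calc ∑ k, |(v ᵥ* M) k| ≤ ∑ k, ∑ j, |v j| * |M j k| := by
        gcongr with k _
        exact (Finset.abs_sum_le_sum_abs _ _).trans_eq (by simp only [abs_mul])
    _ ≤ ∑ k, ∑ j, (∑ j, |v j|) * |M j k| := by gcongr with k _ j _; exact hv j
    _ = (∑ j, |v j|) * mnorm M := by
        rw [mnorm, Finset.sum_comm, Finset.mul_sum]
        simp only [Finset.mul_sum]

lemma mul_mnorm_le_sum_vecMul {M : Matrix ι κ ℝ} (hM : ∀ j k, 0 ≤ M j k) {v : ι → ℝ} {c : ℝ}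
    (hv : ∀ j, c ≤ v j) : c * mnorm M ≤ ∑ k, (v ᵥ* M) k :=
  calc c * mnorm M = ∑ k, ∑ j, c * M j k := by
        simp only [mnorm, abs_of_nonneg (hM _ _), Finset.mul_sum]
        exact Finset.sum_comm
    _ ≤ ∑ k, ∑ j, v j * M j k := by
        gcongr with k _ j _
        exacts [hM j k, hv j]
    _ = ∑ k, (v ᵥ* M) k := rfl

end Matrix

lemma exists_pos_forall_le {ι : Type*} [Finite ι] {w : ι → ℝ} (hw : ∀ l, 0 < w l) :
    ∃ c > 0, ∀ l, c ≤ w l := by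
  cases isEmpty_or_nonempty ι
  · exact ⟨1, one_pos, isEmptyElim⟩
  · obtain ⟨l₀, hl₀⟩ := Finite.exists_min w
    exact ⟨w l₀, hw l₀, hl₀⟩

lemma limsup_div_natCast_eq_zero {f : ℕ → ℝ} {L B : ℝ} (hB : ∀ᶠ t in atTop, f t ≤ B)
    (hL : ∃ᶠ t in atTop, L ≤ f t) : limsup (fun t : ℕ => f t / t) atTop = 0 := by
  have hdiv : ∀ c : ℝ, Tendsto (fun t : ℕ => c / t) atTop (𝓝 0) :=
    tendsto_const_div_atTop_nhds_zero_nat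
  have hupper : (fun t : ℕ => f t / t) ≤ᶠ[atTop] fun t => B / t :=
    hB.mono fun t ht => div_le_div_of_nonneg_right ht t.cast_nonneg
  have hlower : ∀ δ > 0, ∃ᶠ t : ℕ in atTop, -δ ≤ f t / t := fun δ hδ =>
    (hL.and_eventually ((hdiv L).eventually (eventually_ge_nhds (neg_lt_zero.2 hδ)))).mono
      fun t ⟨ht, hLt⟩ => hLt.trans (div_le_div_of_nonneg_right ht t.cast_nonneg)
  have hbdd := (hdiv B).isBoundedUnder_le.mono_le hupper
  refine le_antisymm ?_ (le_of_forall_pos_le_add fun δ hδ => ?_)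
  · exact (limsup_le_limsup hupper (.of_frequently_ge (hlower 1 one_pos))
      (hdiv B).isBoundedUnder_le).trans_eq (hdiv B).limsup_eq
  · linarith [le_limsup_of_frequently_le (hlower δ hδ) hbdd]

variable {m : ℕ} {n : Fin m → ℕ} {A : St m n → Blocks m n} {SA : Set (St m n)}

lemma snorm_nonneg (x : St m n) (i : Fin m) : 0 ≤ snorm x i := by
  unfold snorm; positivity

lemma continuous_snorm (i : Fin m) : Continuous fun x : St m n => snorm x i := by
  unfold snorm; fun_prop

lemma isClosed_cone : IsClosed (cone m n) := by
  simp only [cone, Set.ofPred_forall]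
  exact isClosed_iInter fun i => isClosed_iInter fun j => isClosed_le continuous_const (by fun_prop)

lemma snorm_pos_of_notMem_extinct {x : St m n} (hx : x ∈ cone m n) (hx₀ : x ∉ extinct m n)
    (i : Fin m) : 0 < snorm x i :=
  (snorm_nonneg x i).lt_of_ne' (Finset.prod_ne_zero_iff.1 (fun h => hx₀ ⟨hx, h⟩) i
    (Finset.mem_univ i))

lemma continuous_Phi (hA : Continuous A) : Continuous (Phi A) :=
  continuous_pi fun i => (continuous_apply i).matrix_vecMul ((continuous_apply i).comp hA)

lemma Phi_mem_cone (hA : Hyp A SA) {x : St m n} (hx : x ∈ cone m n) : Phi A x ∈ cone m n :=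
  fun i k => Finset.sum_nonneg (s := Finset.univ) fun j _ =>
    mul_nonneg (hx i j) (hA.H1nonneg x i j k)

lemma iterate_Phi_mem_cone (hA : Hyp A SA) {x : St m n} (hx : x ∈ cone m n) (t : ℕ) :
    (Phi A)^[t] x ∈ cone m n := by
  induction t with
  | zero => exact hx
  | succ t ih => rw [Function.iterate_succ_apply']; exact Phi_mem_cone hA ih

lemma eventually_snorm_iterate_le (hA : Hyp A SA) {x : St m n} (hx : x ∈ cone m n)
    (i : Fin m) : ∃ K, ∀ᶠ t in atTop, snorm ((Phi A)^[t] x) i ≤ K := by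
  obtain ⟨K, hK⟩ := hA.H3compact.bddAbove_image (continuous_snorm i).continuousOn
  obtain ⟨T, hT⟩ := hA.H3absorb x hx
  exact ⟨K, eventually_atTop.2 ⟨T, fun t ht => hK ⟨_, hT t ht, rfl⟩⟩⟩

lemma coc_add (A : St m n → Blocks m n) (i : Fin m) (x : St m n) (s t : ℕ) :
    coc A i x (s + t) = coc A i x s * coc A i ((Phi A)^[s] x) t := by
  induction t with
  | zero => simp [coc]
  | succ t ih =>
    rw [← add_assoc, coc, ih, coc, Matrix.mul_assoc, ← Function.iterate_add_apply, add_comm t]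

lemma iterate_Phi_apply (A : St m n → Blocks m n) (i : Fin m) (x : St m n) (t : ℕ) :
    (Phi A)^[t] x i = x i ᵥ* coc A i x t := by
  induction t with
  | zero => simp [coc]
  | succ t ih =>
    rw [Function.iterate_succ_apply', Phi, ih, Matrix.vecMul_vecMul]
    rfl

lemma coc_nonneg (hA : Hyp A SA) (i : Fin m) (x : St m n) (t : ℕ) (j k : Fin (n i)) :
    0 ≤ coc A i x t j k := by
  induction t generalizing k with
  | zero => by_cases h : j = k <;> simp [coc, Matrix.one_apply, h]
  | succ t ih =>
    rw [coc, Matrix.mul_apply]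
    exact Finset.sum_nonneg fun l _ => mul_nonneg (ih l) (hA.H1nonneg _ i l k)

lemma coc_pos_iff (hA : Hyp A SA) {i : Fin m} {P : Matrix (Fin (n i)) (Fin (n i)) ℝ}
    (hP : ∀ j k, 0 ≤ P j k) (hAP : ∀ y ∈ cone m n, ∀ j k, A y i j k = 0 ↔ P j k = 0)
    {x : St m n} (hx : x ∈ cone m n) (t : ℕ) (j k : Fin (n i)) :
    0 < coc A i x t j k ↔ 0 < (P ^ t) j k := by
  induction t generalizing k with
  | zero => simp [coc]
  | succ t ih =>
    have hPt : ∀ j k, 0 ≤ (P ^ t) j k := fun j k => Matrix.pow_apply_nonneg hP t j k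
    rw [coc, pow_succ, mul_apply_pos_iff (coc_nonneg hA i x t) (hA.H1nonneg _ i),
      mul_apply_pos_iff hPt hP]
    refine exists_congr fun l => and_congr (ih l) ?_
    rw [(hA.H1nonneg _ i l k).lt_iff_ne', (hP l k).lt_iff_ne']
    exact (hAP _ (iterate_Phi_mem_cone hA hx t) l k).not

lemma snorm_iterate_le_mul_mnorm_coc (A : St m n → Blocks m n) (i : Fin m) (x : St m n)
    (t : ℕ) : snorm ((Phi A)^[t] x) i ≤ snorm x i * mnorm (coc A i x t) := by
  rw [snorm, iterate_Phi_apply]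
  exact sum_abs_vecMul_le (x i) (coc A i x t)

lemma exists_mnorm_coc_le_mul_snorm (hA : Hyp A SA) {i : Fin m} {x : St m n}
    (hx : x ∈ cone m n) (hxi : 0 < snorm x i) :
    ∃ C ≥ 0, ∀ᶠ t in atTop, mnorm (coc A i x t) ≤ C * snorm ((Phi A)^[t] x) i := by
  obtain ⟨P, ⟨hP, t₀, -, hPpos⟩, hAP⟩ := hA.H2 i
  set D := coc A i x t₀
  have hD : ∀ j k, 0 < D j k := fun j k => (coc_pos_iff hA hP hAP hx t₀ j k).2 (hPpos j k)
  obtain ⟨j₀, -, hj₀⟩ := Finset.exists_ne_zero_of_sum_ne_zero hxi.ne'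
  have hj₀pos : 0 < x i j₀ := (hx i j₀).lt_of_ne' (abs_ne_zero.1 hj₀)
  have hw : ∀ k, 0 < (x i ᵥ* D) k := fun k =>
    Finset.sum_pos' (fun j _ => mul_nonneg (hx i j) (hD j k).le)
      ⟨j₀, Finset.mem_univ _, mul_pos hj₀pos (hD j₀ k)⟩
  obtain ⟨c, hc, hcw⟩ := exists_pos_forall_le hw
  refine ⟨mnorm D / c, by have := mnorm_nonneg D; positivity,
    eventually_atTop.2 ⟨t₀, fun t ht => ?_⟩⟩
  obtain ⟨u, rfl⟩ := Nat.exists_eq_add_of_le ht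
  set R := coc A i ((Phi A)^[t₀] x) u
  have hsnorm : ∑ k, ((x i ᵥ* D) ᵥ* R) k ≤ snorm ((Phi A)^[t₀ + u] x) i := by
    rw [snorm, iterate_Phi_apply, coc_add, ← Matrix.vecMul_vecMul]
    exact Finset.sum_le_sum fun k _ => le_abs_self _
  rw [coc_add, div_mul_eq_mul_div, le_div_iff₀ hc]
  calc mnorm (D * R) * c ≤ mnorm D * mnorm R * c := by gcongr; exact mnorm_mul_le D R
    _ = mnorm D * (c * mnorm R) := by ring
    _ ≤ mnorm D * snorm ((Phi A)^[t₀ + u] x) i := by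
        gcongr
        · exact mnorm_nonneg D
        · exact (mul_mnorm_le_sum_vecMul (coc_nonneg hA i _ u) hcw).trans hsnorm

lemma rate_eq_zero_of_frequently_lt (hA : Hyp A SA) {i : Fin m} {x : St m n}
    (hx : x ∈ cone m n) (hxi : 0 < snorm x i) {ε : ℝ} (hε : 0 < ε)
    (hrec : ∃ᶠ t in atTop, ε < snorm ((Phi A)^[t] x) i) : rate A i x = 0 := by
  obtain ⟨C, hC, hcoc⟩ := exists_mnorm_coc_le_mul_snorm hA hx hxi
  obtain ⟨K, hK⟩ := eventually_snorm_iterate_le hA hx i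
  refine limsup_div_natCast_eq_zero (B := C * K) (L := Real.log (ε / snorm x i)) ?_ ?_
  · -- `log_le_self` needs no positivity of the cocycle (`Real.log 0 = 0`)
    filter_upwards [hcoc, hK] with t hcoct hKt
    calc Real.log (mnorm (coc A i x t)) ≤ mnorm (coc A i x t) :=
          Real.log_le_self (mnorm_nonneg _)
      _ ≤ C * K := hcoct.trans (mul_le_mul_of_nonneg_left hKt hC)
  · refine hrec.mono fun t ht => Real.log_le_log (div_pos hε hxi) ?_
    rw [div_le_iff₀' hxi]
    exact ht.le.trans (snorm_iterate_le_mul_mnorm_coc A i x t)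

/-- Proposition 7: an invariant probability measure giving full
mass to the set of states where every species is present has zero long-term
growth rate for every species. -/
theorem rate_zero_of_interior_measure {m : ℕ} {n : Fin m → ℕ}
    (A : St m n → Blocks m n) (SA : Set (St m n)) (hA : Hyp A SA)
    (μ : Measure (St m n)) (hprob : IsProbabilityMeasure μ)
    (hinv : μ.map (Phi A) = μ)
    (hcone : μ (cone m n) = 1) (hS0 : μ (extinct m n) = 0) :
    ∀ i, rateMu A i μ = 0 := by
  intro i
  have hmp : MeasurePreserving (Phi A) μ μ := ⟨(continuous_Phi hA.H1cont).measurable, hinv⟩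
  have hae : ∀ᵐ x ∂μ, rate A i x = 0 := by
    filter_upwards [(mem_ae_iff_prob_eq_one isClosed_cone.measurableSet).2 hcone,
      measure_eq_zero_iff_ae_notMem.1 hS0, hmp.conservative.ae_frequently_mem_of_mem_nhds]
      with x hx hx₀ hrec
    have hxi := snorm_pos_of_notMem_extinct hx hx₀ i
    exact rate_eq_zero_of_frequently_lt hA hx hxi (half_pos hxi) (hrec _
      ((isOpen_lt continuous_const (continuous_snorm i)).mem_nhds (half_lt_self hxi)))
  rw [rateMu, integral_congr_ae hae, integral_zero]

end RP
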